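/- arXiv:1312.5378 — 8 statements merged into one kernel-verified Lean document; each statement's English description precedes it below -/
import Mathlib

section
/- Single-step Skolemization soundness (Theorem 1, one application of Definition 3): Let D be a finite nonempty type (the domain), n a natural number, A a finite type of ground atoms with weight functions wt, wf : A → ℝ, let φ : D → (Fin n → D) → (A → Bool) → Prop give the truth value of a subformula φ(x,ȳ) under each interpretation, and let G : (A → Bool) → ((Fin n → D) → Prop) → Prop represent the remainder of the theory Δ as a function of the interpretation and of the truth values assigned to the occurrences of the subexpression ∃x φ(x,ȳ). Then the sum over all ω : A → Bool with G ω (fun ȳ => ∃ x, φ x ȳ ω) of W(ω) equals the sum over all triples (ω : A → Bool, Z S : (Fin n → D) → Bool) satisfying G ω (fun ȳ => Z ȳ = true), and (∀ ȳ x, Z ȳ = true ∨ ¬ φ x ȳ ω), and (∀ ȳ, S ȳ = true ∨ Z ȳ = true), and (∀ ȳ x, S ȳ = true ∨ ¬ φ x ȳ ω), of W(ω) · ∏_{ȳ : Fin n → D} (if S ȳ then (1:ℝ) else -1). -/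
open Classical in
private lemma ite_forall_prod {ι : Type*} [Fintype ι] (Q : ι → Prop) (f : ι → ℝ) :
    (if (∀ i, Q i) then ∏ i, f i else 0) = ∏ i, if Q i then f i else 0 := by
  by_cases h : ∀ i, Q i
  · simp [h]
  · push_neg at h
    obtain ⟨i, hi⟩ := h
    rw [if_neg (by intro h'; exact hi (h' i))]
    exact (Finset.prod_eq_zero (Finset.mem_univ i) (by simp [hi])).symm

open Classical in
/-- Single-step Skolemization soundness (one application of Definition 3). -/
theorem skolemization_single_step_sound
    (D : Type*) [Fintype D] [Nonempty D] (n : ℕ)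
    (A : Type*) [Fintype A] (wt wf : A → ℝ)
    (φ : D → (Fin n → D) → (A → Bool) → Prop)
    (G : (A → Bool) → ((Fin n → D) → Prop) → Prop) :
    ∑ ω ∈ Finset.univ.filter
        (fun ω : A → Bool => G ω (fun ys => ∃ x, φ x ys ω)),
      ∏ a, (if ω a then wt a else wf a)
    =
    ∑ p ∈ Finset.univ.filter
        (fun p : (A → Bool) × ((Fin n → D) → Bool) × ((Fin n → D) → Bool) =>
          G p.1 (fun ys => p.2.1 ys = true) ∧
          (∀ ys x, p.2.1 ys = true ∨ ¬ φ x ys p.1) ∧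
          (∀ ys, p.2.2 ys = true ∨ p.2.1 ys = true) ∧
          (∀ ys x, p.2.2 ys = true ∨ ¬ φ x ys p.1)),
      (∏ a, (if p.1 a then wt a else wf a)) *
        ∏ ys : Fin n → D, (if p.2.2 ys then (1 : ℝ) else -1) := by
  classical
  rw [Finset.sum_filter, Finset.sum_filter, Fintype.sum_prod_type]
  refine Finset.sum_congr rfl fun ω _ => ?_
  rw [Fintype.sum_prod_type]
  set W : ℝ := ∏ a, (if ω a then wt a else wf a) with hW
  set E : (Fin n → D) → Prop := fun ys => ∃ x, φ x ys ω with hE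
  -- Step 1: compute the inner sum over s for each z.
  have hs : ∀ z : (Fin n → D) → Bool,
      (∑ s : (Fin n → D) → Bool,
        if G ω (fun ys => z ys = true) ∧
            (∀ ys x, z ys = true ∨ ¬ φ x ys ω) ∧
            (∀ ys, s ys = true ∨ z ys = true) ∧
            (∀ ys x, s ys = true ∨ ¬ φ x ys ω) then
          W * ∏ ys : Fin n → D, (if s ys then (1 : ℝ) else -1) else 0)
      = if G ω (fun ys => z ys = true) ∧ (∀ ys x, z ys = true ∨ ¬ φ x ys ω) ∧
          (∀ ys, z ys = true → E ys) then W else 0 := by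
    intro z
    by_cases hzc : G ω (fun ys => z ys = true) ∧ (∀ ys x, z ys = true ∨ ¬ φ x ys ω)
    · have key : (∑ s : (Fin n → D) → Bool,
          if (∀ ys, s ys = true ∨ z ys = true) ∧ (∀ ys x, s ys = true ∨ ¬ φ x ys ω) then
            ∏ ys : Fin n → D, (if s ys then (1 : ℝ) else -1) else 0)
          = if (∀ ys, z ys = true → E ys) then 1 else 0 := by
        have step1 : ∀ s : (Fin n → D) → Bool,
            (if (∀ ys, s ys = true ∨ z ys = true) ∧ (∀ ys x, s ys = true ∨ ¬ φ x ys ω) then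
              ∏ ys : Fin n → D, (if s ys then (1 : ℝ) else -1) else 0)
            = ∏ ys : Fin n → D,
                (if (s ys = true ∨ z ys = true) ∧ (∀ x, s ys = true ∨ ¬ φ x ys ω) then
                  (if s ys then (1 : ℝ) else -1) else 0) := by
          intro s
          by_cases h : (∀ ys, s ys = true ∨ z ys = true) ∧ (∀ ys x, s ys = true ∨ ¬ φ x ys ω)
          · rw [if_pos h]
            exact Finset.prod_congr rfl fun ys _ =>
              (if_pos ⟨h.1 ys, fun x => h.2 ys x⟩).symm
          · rw [if_neg h]
            have h' : ¬ ∀ ys, (s ys = true ∨ z ys = true) ∧ (∀ x, s ys = true ∨ ¬ φ x ys ω) :=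
              fun hc => h ⟨fun ys => (hc ys).1, fun ys => (hc ys).2⟩
            obtain ⟨ys, hys⟩ := not_forall.mp h'
            refine (Finset.prod_eq_zero (Finset.mem_univ ys) ?_).symm
            exact if_neg hys
        calc (∑ s : (Fin n → D) → Bool,
              if (∀ ys, s ys = true ∨ z ys = true) ∧ (∀ ys x, s ys = true ∨ ¬ φ x ys ω) then
                ∏ ys : Fin n → D, (if s ys then (1 : ℝ) else -1) else 0)
            = ∑ s : (Fin n → D) → Bool, ∏ ys : Fin n → D,
                (if (s ys = true ∨ z ys = true) ∧ (∀ x, s ys = true ∨ ¬ φ x ys ω) then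
                  (if s ys then (1 : ℝ) else -1) else 0) := by
              exact Finset.sum_congr rfl fun s _ => step1 s
          _ = ∏ ys : Fin n → D, ∑ b : Bool,
                (if (b = true ∨ z ys = true) ∧ (∀ x, b = true ∨ ¬ φ x ys ω) then
                  (if b then (1 : ℝ) else -1) else 0) := by
              rw [Fintype.prod_sum]
          _ = ∏ ys : Fin n → D, (if z ys = true → E ys then (1 : ℝ) else 0) := by
              refine Finset.prod_congr rfl fun ys _ => ?_
              rw [Fintype.sum_bool]
              rw [if_pos (⟨Or.inl rfl, fun x => Or.inl rfl⟩ :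
                ((true : Bool) = true ∨ z ys = true) ∧ ∀ x, (true : Bool) = true ∨ ¬ φ x ys ω),
                if_pos rfl]
              by_cases hz : z ys = true
              · by_cases hEys : E ys
                · obtain ⟨x, hx⟩ := hEys
                  rw [if_neg (fun h => by
                    rcases h.2 x with h' | h'
                    · exact Bool.false_ne_true h'
                    · exact h' hx),
                    if_pos (fun _ => ⟨x, hx⟩)]
                  norm_num
                · rw [if_pos ⟨Or.inr hz, fun x => Or.inr fun hx => hEys ⟨x, hx⟩⟩,
                    if_neg Bool.false_ne_true, if_neg (fun h => hEys (h hz))]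
                  norm_num
              · rw [if_neg (fun h => by
                  rcases h.1 with h' | h'
                  · exact Bool.false_ne_true h'
                  · exact hz h'),
                  if_pos (fun h => absurd h hz)]
                norm_num
          _ = if (∀ ys, z ys = true → E ys) then 1 else 0 := by
              by_cases h : ∀ ys, z ys = true → E ys
              · rw [if_pos h]
                exact Finset.prod_eq_one fun ys _ => if_pos (h ys)
              · obtain ⟨ys, hys⟩ := not_forall.mp h
                rw [if_neg h]
                exact Finset.prod_eq_zero (Finset.mem_univ ys) (if_neg hys)
      have hfac : ∀ s : (Fin n → D) → Bool,
          (if G ω (fun ys => z ys = true) ∧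
              (∀ ys x, z ys = true ∨ ¬ φ x ys ω) ∧
              (∀ ys, s ys = true ∨ z ys = true) ∧
              (∀ ys x, s ys = true ∨ ¬ φ x ys ω) then
            W * ∏ ys : Fin n → D, (if s ys then (1 : ℝ) else -1) else 0)
          = W * (if (∀ ys, s ys = true ∨ z ys = true) ∧
              (∀ ys x, s ys = true ∨ ¬ φ x ys ω) then
              ∏ ys : Fin n → D, (if s ys then (1 : ℝ) else -1) else 0) := by
        intro s
        by_cases hscon : (∀ ys, s ys = true ∨ z ys = true) ∧ (∀ ys x, s ys = true ∨ ¬ φ x ys ω)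
        · rw [if_pos ⟨hzc.1, hzc.2, hscon.1, hscon.2⟩, if_pos hscon]
        · rw [if_neg (fun h => hscon ⟨h.2.2.1, h.2.2.2⟩), if_neg hscon, mul_zero]
      rw [Finset.sum_congr rfl fun s _ => hfac s, ← Finset.mul_sum, key]
      by_cases hze : ∀ ys, z ys = true → E ys
      · rw [if_pos hze, if_pos ⟨hzc.1, hzc.2, hze⟩, mul_one]
      · rw [if_neg hze, if_neg (fun h => hze h.2.2), mul_zero]
    · rw [if_neg (fun h => hzc ⟨h.1, h.2.1⟩)]
      refine Finset.sum_eq_zero fun s _ => ?_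
      exact if_neg (fun h => hzc ⟨h.1, h.2.1⟩)
  rw [Finset.sum_congr rfl fun z _ => hs z]
  -- Step 2: the condition forces z = fun ys => decide (E ys)
  have hcond : ∀ z : (Fin n → D) → Bool,
      (G ω (fun ys => z ys = true) ∧ (∀ ys x, z ys = true ∨ ¬ φ x ys ω) ∧
        (∀ ys, z ys = true → E ys))
      ↔ (z = (fun ys => decide (E ys)) ∧ G ω E) := by
    intro z
    constructor
    · rintro ⟨hG, h1, h2⟩
      have hz : z = fun ys => decide (E ys) := by
        funext ys
        cases hzy : z ys with
        | true =>
          exact (decide_eq_true (h2 ys hzy)).symm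
        | false =>
          by_cases hEys : E ys
          · obtain ⟨x, hx⟩ := hEys
            rcases h1 ys x with h | h
            · rw [hzy] at h; exact absurd h Bool.false_ne_true
            · exact absurd hx h
          · exact (decide_eq_false hEys).symm
      refine ⟨hz, ?_⟩
      have heq : (fun ys => z ys = true) = E := by
        funext ys; rw [hz]; simp [decide_eq_true_eq]
      rwa [heq] at hG
    · rintro ⟨hz, hG⟩
      subst hz
      refine ⟨?_, fun ys x => ?_, fun ys h => of_decide_eq_true h⟩
      · have heq : (fun ys => decide (E ys) = true) = E := by
          funext ys; simp [decide_eq_true_eq]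
        rwa [heq]
      · by_cases hEys : E ys
        · exact Or.inl (decide_eq_true hEys)
        · exact Or.inr (fun hφ => hEys ⟨x, hφ⟩)
  have hrw : ∀ z : (Fin n → D) → Bool,
      (if G ω (fun ys => z ys = true) ∧ (∀ ys x, z ys = true ∨ ¬ φ x ys ω) ∧
          (∀ ys, z ys = true → E ys) then W else 0)
      = if z = (fun ys => decide (E ys)) ∧ G ω E then W else 0 := by
    intro z
    by_cases h : z = (fun ys => decide (E ys)) ∧ G ω E
    · rw [if_pos ((hcond z).mpr h), if_pos h]
    · rw [if_neg (fun h' => h ((hcond z).mp h')), if_neg h]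
  rw [Finset.sum_congr rfl fun z _ => hrw z]
  by_cases hG : G ω E
  · simp only [hG, and_true, if_pos hG]
    rw [Finset.sum_ite_eq' Finset.univ (fun ys => decide (E ys)) (fun _ => W)]
    simp
  · simp [hG]
end

section
/- Proposition 1 (Skolemization of a prenex ∀∃ sentence without a Tseitin predicate, with modularity): Let D be a finite nonempty type, n a natural number, A a finite type of atoms with weights wt, wf : A → ℝ, let φ : D → (Fin n → D) → (A → Bool) → Prop give the truth value of a quantifier-free subformula, and let H : (A → Bool) → Prop be an arbitrary additional constraint. Then the sum over all ω : A → Bool satisfying (∀ ȳ, ∃ x, φ x ȳ ω) and H ω of W(ω) equals the sum over all pairs (ω : A → Bool, S : (Fin n → D) → Bool) satisfying (∀ ȳ x, S ȳ = true ∨ ¬ φ x ȳ ω) and H ω of W(ω) · ∏_{ȳ : Fin n → D} (if S ȳ then (1:ℝ) else -1). -/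
open Classical in
private lemma skolem_inner_sum
    (D : Type*) [Fintype D] [Nonempty D] (n : ℕ)
    (A : Type*) (φ : D → (Fin n → D) → (A → Bool) → Prop) (ω : A → Bool) :
    ∑ S : (Fin n → D) → Bool,
      (if (∀ ys x, S ys = true ∨ ¬ φ x ys ω)
        then ∏ ys : Fin n → D, (if S ys then (1 : ℝ) else -1) else 0)
    = if (∀ ys, ∃ x, φ x ys ω) then 1 else 0 := by
  have key : ∀ S : (Fin n → D) → Bool,
      (if (∀ ys x, S ys = true ∨ ¬ φ x ys ω)
        then ∏ ys : Fin n → D, (if S ys then (1 : ℝ) else -1) else 0)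
      = ∏ ys : Fin n → D,
          (if (∀ x, S ys = true ∨ ¬ φ x ys ω)
            then (if S ys then (1 : ℝ) else -1) else 0) := by
    intro S
    by_cases h : ∀ ys x, S ys = true ∨ ¬ φ x ys ω
    · rw [if_pos h]
      exact Finset.prod_congr rfl (fun ys _ => by rw [if_pos (h ys)])
    · rw [if_neg h]
      push_neg at h
      obtain ⟨ys, hy⟩ := h
      exact (Finset.prod_eq_zero (Finset.mem_univ ys)
        (by rw [if_neg (by push_neg; exact hy)])).symm
  simp only [key]
  rw [← Fintype.prod_sum (fun ys b =>
    if (∀ x, b = true ∨ ¬ φ x ys ω) then (if b then (1 : ℝ) else -1) else 0)]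
  by_cases h : ∀ ys, ∃ x, φ x ys ω
  · rw [if_pos h]
    apply Finset.prod_eq_one
    intro ys _
    obtain ⟨x, hx⟩ := h ys
    have h1 : ¬ (∀ x', (false : Bool) = true ∨ ¬ φ x' ys ω) := by
      push_neg; exact ⟨x, by simp, hx⟩
    have h2 : ∀ x', (true : Bool) = true ∨ ¬ φ x' ys ω := fun _ => Or.inl rfl
    rw [Fintype.sum_bool, if_pos h2, if_neg h1]
    norm_num
  · rw [if_neg h]
    push_neg at h
    obtain ⟨ys, hy⟩ := h
    apply Finset.prod_eq_zero (Finset.mem_univ ys)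
    have h1 : ∀ x', (false : Bool) = true ∨ ¬ φ x' ys ω := by
      intro x'; exact Or.inr (hy x')
    have h2 : ∀ x', (true : Bool) = true ∨ ¬ φ x' ys ω := fun _ => Or.inl rfl
    rw [Fintype.sum_bool, if_pos h2, if_pos h1]
    norm_num

open Classical in
/-- Proposition 1: Skolemization of a prenex ∀∃ sentence without a Tseitin
predicate, with modularity. -/
theorem skolemization_forall_exists_no_tseitin
    (D : Type*) [Fintype D] [Nonempty D] (n : ℕ)
    (A : Type*) [Fintype A] (wt wf : A → ℝ)
    (φ : D → (Fin n → D) → (A → Bool) → Prop)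
    (H : (A → Bool) → Prop) :
    ∑ ω ∈ Finset.univ.filter
        (fun ω : A → Bool => (∀ ys, ∃ x, φ x ys ω) ∧ H ω),
      ∏ a, (if ω a then wt a else wf a)
    =
    ∑ p ∈ Finset.univ.filter
        (fun p : (A → Bool) × ((Fin n → D) → Bool) =>
          (∀ ys x, p.2 ys = true ∨ ¬ φ x ys p.1) ∧ H p.1),
      (∏ a, (if p.1 a then wt a else wf a)) *
        ∏ ys : Fin n → D, (if p.2 ys then (1 : ℝ) else -1) := by
  rw [Finset.sum_filter, Finset.sum_filter, Fintype.sum_prod_type]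
  apply Finset.sum_congr rfl
  intro ω _
  by_cases hH : H ω
  · have := skolem_inner_sum D n A φ ω
    by_cases hφ : ∀ ys, ∃ x, φ x ys ω
    · rw [if_pos ⟨hφ, hH⟩]
      calc ∏ a, (if ω a then wt a else wf a)
          = (∏ a, (if ω a then wt a else wf a)) *
            ∑ S : (Fin n → D) → Bool,
              (if (∀ ys x, S ys = true ∨ ¬ φ x ys ω)
                then ∏ ys : Fin n → D, (if S ys then (1 : ℝ) else -1) else 0) := by
              rw [this, if_pos hφ, mul_one]
        _ = _ := by
              rw [Finset.mul_sum]
              apply Finset.sum_congr rfl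
              intro S _
              by_cases hc : ∀ ys x, S ys = true ∨ ¬ φ x ys ω
              · rw [if_pos hc, if_pos ⟨hc, hH⟩]
              · rw [if_neg hc, if_neg (fun h => hc h.1), mul_zero]
    · rw [if_neg (fun h => hφ h.1)]
      have : ∑ S : (Fin n → D) → Bool,
          (if (∀ ys x, S ys = true ∨ ¬ φ x ys ω) ∧ H ω
            then (∏ a, (if ω a then wt a else wf a)) *
              ∏ ys : Fin n → D, (if S ys then (1 : ℝ) else -1) else 0)
          = (∏ a, (if ω a then wt a else wf a)) *
            ∑ S : (Fin n → D) → Bool,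
              (if (∀ ys x, S ys = true ∨ ¬ φ x ys ω)
                then ∏ ys : Fin n → D, (if S ys then (1 : ℝ) else -1) else 0) := by
        rw [Finset.mul_sum]
        apply Finset.sum_congr rfl
        intro S _
        by_cases hc : ∀ ys x, S ys = true ∨ ¬ φ x ys ω
        · rw [if_pos hc, if_pos ⟨hc, hH⟩]
        · rw [if_neg hc, if_neg (fun h => hc h.1), mul_zero]
      rw [this, skolem_inner_sum D n A φ ω, if_neg hφ, mul_zero]
  · rw [if_neg (fun h => hH h.2)]
    symm
    apply Finset.sum_eq_zero
    intro S _
    rw [if_neg (fun h => hH h.2)]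
end

section
/- Tseitin isolation step preserves the weighted model count: Let D be a finite type, n a natural number, A a finite type of atoms with weights wt, wf : A → ℝ, let ψ : (Fin n → D) → (A → Bool) → Prop give the truth value of a subformula under each interpretation, and let G : (A → Bool) → ((Fin n → D) → Prop) → Prop represent the remainder of the theory as a function of the interpretation and the truth values of the occurrences of the subformula. Then the sum over all ω : A → Bool with G ω (fun ȳ => ψ ȳ ω) of W(ω) equals the sum over all pairs (ω : A → Bool, Z : (Fin n → D) → Bool) satisfying G ω (fun ȳ => Z ȳ = true) and (∀ ȳ, Z ȳ = true ↔ ψ ȳ ω) of W(ω), where the fresh Tseitin atoms Z(ȳ) carry weight 1 whether true or false. -/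
open Classical in
/-- The Tseitin isolation step preserves the weighted model count. -/
theorem tseitin_isolation_preserves_wmc
    (D : Type*) [Fintype D] (n : ℕ)
    (A : Type*) [Fintype A] (wt wf : A → ℝ)
    (ψ : (Fin n → D) → (A → Bool) → Prop)
    (G : (A → Bool) → ((Fin n → D) → Prop) → Prop) :
    ∑ ω ∈ Finset.univ.filter
        (fun ω : A → Bool => G ω (fun ys => ψ ys ω)),
      ∏ a, (if ω a then wt a else wf a)
    =
    ∑ p ∈ Finset.univ.filter
        (fun p : (A → Bool) × ((Fin n → D) → Bool) =>
          G p.1 (fun ys => p.2 ys = true) ∧ (∀ ys, p.2 ys = true ↔ ψ ys p.1)),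
      ∏ a, (if p.1 a then wt a else wf a) := by
  apply Finset.sum_nbij' (fun ω => (ω, fun ys => decide (ψ ys ω)))
    (fun p => p.1)
  · intro ω hω
    simp only [Finset.mem_filter, Finset.mem_univ, true_and] at hω ⊢
    constructor
    · convert hω using 2
      simp
    · intro ys; simp
  · intro p hp
    simp only [Finset.mem_filter, Finset.mem_univ, true_and] at hp ⊢
    obtain ⟨hG, hiff⟩ := hp
    convert hG using 2
    rename_i ys
    exact (hiff ys).symm
  · intro ω hω; rfl
  · intro p hp
    simp only [Finset.mem_filter, Finset.mem_univ, true_and] at hp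
    obtain ⟨hG, hiff⟩ := hp
    ext
    · rfl
    · rename_i ys
      have h2 := hiff ys
      rcases h : p.2 ys with _|_ <;> simp [h] at h2 <;> simp [h2]
  · intro ω hω; rfl
end

section
/- Convert-to-implication step (negative weights make the implication behave like the universally quantified formula): Let D be a finite type, n a natural number, A a finite type of atoms with weights wt, wf : A → ℝ, let ψ : (Fin n → D) → (A → Bool) → Prop, and let G : (A → Bool) → Prop be an arbitrary constraint. Then the sum over all pairs (ω : A → Bool, S : (Fin n → D) → Bool) satisfying G ω and (∀ ȳ, ψ ȳ ω → S ȳ = true) of W(ω) · ∏_{ȳ : Fin n → D} (if S ȳ then (1:ℝ) else -1) equals the sum over all ω : A → Bool satisfying G ω and (∀ ȳ, ψ ȳ ω) of W(ω). -/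
set_option maxHeartbeats 2000000

open Classical in
lemma inner_sum_impl {I : Type*} [Fintype I] [DecidableEq I] (P : I → Prop) :
    ∑ S : I → Bool,
      (if (∀ i, P i → S i = true) then ∏ i, (if S i then (1:ℝ) else -1) else 0)
    = if (∀ i, P i) then (1:ℝ) else 0 := by
  have key : ∀ S : I → Bool,
      (if (∀ i, P i → S i = true) then ∏ i, (if S i then (1:ℝ) else -1) else 0)
      = ∏ i, (if (P i → S i = true) then (if S i then (1:ℝ) else -1) else 0) := by
    intro S
    by_cases h : ∀ i, P i → S i = true
    · rw [if_pos h]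
      exact Finset.prod_congr rfl (fun i _ => by rw [if_pos (h i)])
    · push_neg at h
      obtain ⟨i, hi, hSi⟩ := h
      rw [if_neg (by push_neg; exact ⟨i, hi, hSi⟩)]
      rw [Finset.prod_eq_zero (Finset.mem_univ i)]
      rw [if_neg]
      intro h'; exact hSi (h' hi)
  simp only [key]
  rw [show (∑ S : I → Bool, ∏ i, (if (P i → S i = true) then (if S i then (1:ℝ) else -1) else 0))
      = ∏ i, ∑ b : Bool, (if (P i → b = true) then (if b then (1:ℝ) else -1) else 0) from ?_]
  · have : ∀ i, (∑ b : Bool, (if (P i → b = true) then (if b then (1:ℝ) else -1) else 0))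
        = if P i then (1:ℝ) else 0 := by
      intro i
      by_cases h : P i <;> simp [h]
    simp only [this]
    by_cases h : ∀ i, P i
    · rw [if_pos h]; exact Finset.prod_eq_one (fun i _ => by rw [if_pos (h i)])
    · rw [if_neg h]
      push_neg at h
      obtain ⟨i, hi⟩ := h
      exact Finset.prod_eq_zero (Finset.mem_univ i) (if_neg hi)
  · rw [Finset.prod_univ_sum, Fintype.piFinset_univ]

open Classical in
/-- Convert-to-implication step: negative weights make the implication behave
like the universally quantified formula. -/
theorem convert_to_implication_step
    (D : Type*) [Fintype D] (n : ℕ)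
    (A : Type*) [Fintype A] (wt wf : A → ℝ)
    (ψ : (Fin n → D) → (A → Bool) → Prop)
    (G : (A → Bool) → Prop) :
    ∑ p ∈ Finset.univ.filter
        (fun p : (A → Bool) × ((Fin n → D) → Bool) =>
          G p.1 ∧ (∀ ys, ψ ys p.1 → p.2 ys = true)),
      (∏ a, (if p.1 a then wt a else wf a)) *
        ∏ ys : Fin n → D, (if p.2 ys then (1 : ℝ) else -1)
    =
    ∑ ω ∈ Finset.univ.filter
        (fun ω : A → Bool => G ω ∧ ∀ ys, ψ ys ω),
      ∏ a, (if ω a then wt a else wf a) := by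
  rw [Finset.sum_filter, Finset.sum_filter, Fintype.sum_prod_type]
  apply Finset.sum_congr rfl
  intro ω _
  by_cases hG : G ω
  · have : ∀ S : (Fin n → D) → Bool,
        (if (G ω ∧ ∀ ys, ψ ys ω → S ys = true) then
          (∏ a, (if ω a then wt a else wf a)) * ∏ ys, (if S ys then (1:ℝ) else -1) else 0)
        = (∏ a, (if ω a then wt a else wf a)) *
          (if (∀ ys, ψ ys ω → S ys = true) then ∏ ys, (if S ys then (1:ℝ) else -1) else 0) := by
      intro S
      by_cases h : ∀ ys, ψ ys ω → S ys = true <;> simp [h, hG]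
    simp only [this]
    have hsum : (∑ S : (Fin n → D) → Bool,
        if ∀ ys, ψ ys ω → S ys = true then ∏ ys, (if S ys then (1:ℝ) else -1) else 0)
        = if (∀ ys, ψ ys ω) then (1:ℝ) else 0 := inner_sum_impl _
    rw [← Finset.mul_sum, hsum]
    by_cases h : ∀ ys, ψ ys ω <;> simp [h, hG]
  · simp [hG]
end

section
/- Skolemization of the boss example (Formula 6): Let D be a finite nonempty type and let wW⁺, wW⁻, wB⁺, wB⁻ : ℝ be weights for the predicates WorksFor and Boss. Then the sum over all pairs (Wf : D → D → Bool, B : D → Bool) satisfying (∀ x, ∃ y, Wf x y = true ∨ B x = true) of (∏_{x,y} if Wf x y then wW⁺ else wW⁻) · (∏_x if B x then wB⁺ else wB⁻) equals the sum over all triples (Wf : D → D → Bool, B : D → Bool, S : D → Bool) satisfying (∀ x y, S x = true ∨ Wf x y = false) and (∀ x, S x = true ∨ B x = false) of (∏_{x,y} if Wf x y then wW⁺ else wW⁻) · (∏_x if B x then wB⁺ else wB⁻) · (∏_x if S x then (1:ℝ) else -1). -/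
/-!
Fix `WorksFor` and `Boss` and sum only over the Skolem predicate `S`. The constraints force
`S x` exactly at those `x` with `∃ y, WorksFor x y` or `Boss x`, and the signed sum over `S`
factorises over `x`: a forced `x` contributes `1`, a free one `1 + (-1) = 0`. So that sum is the
indicator of `∀ x, ∃ y, WorksFor x y ∨ Boss x`, which is the left-hand side fibre by fibre.
-/

open Finset

theorem sum_signs_of_forall_imp {D R : Type*} [Fintype D] [DecidableEq D] [CommRing R]
    (P : D → Prop) [DecidablePred P] :
    ∑ s : D → Bool, (if ∀ x, P x → s x = true then ∏ x, (if s x then (1 : R) else -1) else 0)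
      = if ∀ x, P x then 1 else 0 := by
  have hcoord (x : D) :
      ∑ b : Bool, (if P x → b = true then (if b then (1 : R) else -1) else 0)
        = if P x then 1 else 0 := by
    by_cases h : P x <;> simp [h]
  simp_rw [← Fintype.prod_ite_zero, ← Fintype.prod_boole, ← hcoord, Fintype.prod_sum]

theorem skolem_constraints_iff {D : Type*} (a : D → D → Bool) (b s : D → Bool) :
    ((∀ x y, s x = true ∨ a x y = false) ∧ (∀ x, s x = true ∨ b x = false))
      ↔ ∀ x, ((∃ y, a x y = true) ∨ b x = true) → s x = true := by
  simp only [or_iff_not_imp_right, Bool.not_eq_false]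
  grind

theorem sum_skolem_fibre {D R : Type*} [Fintype D] [DecidableEq D] [Nonempty D] [CommRing R]
    (a : D → D → Bool) (b : D → Bool) (c : R) :
    ∑ s : D → Bool,
      (if (∀ x y, s x = true ∨ a x y = false) ∧ (∀ x, s x = true ∨ b x = false)
        then c * ∏ x, (if s x then (1 : R) else -1) else 0)
      = if ∀ x, ∃ y, a x y = true ∨ b x = true then c else 0 := by
  simp_rw [skolem_constraints_iff, ← mul_ite_zero, ← mul_sum, sum_signs_of_forall_imp, mul_ite_zero,
    mul_one, exists_or, exists_const]

open Classical in
/-- Skolemization of the boss example (Formula 6):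
∀x ∃y, WorksFor(x,y) ∨ Boss(x). -/
theorem skolemization_boss_example
    (D : Type*) [Fintype D] [Nonempty D]
    (wWp wWm wBp wBm : ℝ) :
    ∑ p ∈ Finset.univ.filter
        (fun p : (D → D → Bool) × (D → Bool) =>
          ∀ x, ∃ y, p.1 x y = true ∨ p.2 x = true),
      (∏ x, ∏ y, (if p.1 x y then wWp else wWm)) *
        ∏ x, (if p.2 x then wBp else wBm)
    =
    ∑ q ∈ Finset.univ.filter
        (fun q : (D → D → Bool) × (D → Bool) × (D → Bool) =>
          (∀ x y, q.2.2 x = true ∨ q.1 x y = false) ∧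
          (∀ x, q.2.2 x = true ∨ q.2.1 x = false)),
      (∏ x, ∏ y, (if q.1 x y then wWp else wWm)) *
        (∏ x, (if q.2.1 x then wBp else wBm)) *
        ∏ x, (if q.2.2 x then (1 : ℝ) else -1) := by
  rw [sum_filter, sum_filter]
  simp only [Fintype.sum_prod_type]
  refine sum_congr rfl fun a _ => sum_congr rfl fun b _ => ?_
  convert (sum_skolem_fibre a b _).symm using 1
end

section
/- Model count of the smokers theory (Formula 5): For every natural number n, the number of pairs (S : Fin n → Bool, F : Fin n → Fin n → Bool) satisfying (∀ x y, S x = true ∧ F x y = true → S y = true) equals ∑_{k=0}^{n} (n choose k) · 2^(n² − k·(n−k)). -/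
open Finset

open Classical in
lemma count_false_on (α : Type*) [Fintype α] [DecidableEq α] (B : Finset α) :
    (univ.filter (fun f : α → Bool => ∀ a ∈ B, f a = false)).card
      = 2 ^ (Fintype.card α - B.card) := by
  have h : (univ.filter (fun f : α → Bool => ∀ a ∈ B, f a = false))
      = Fintype.piFinset (fun a => if a ∈ B then {false} else Finset.univ) := by
    ext f
    simp only [mem_filter, mem_univ, true_and, Fintype.mem_piFinset]
    constructor
    · intro h a
      by_cases ha : a ∈ B <;> simp [ha, h a]
    · intro h a ha
      have := h a
      simp [ha] at this
      exact this
  rw [h, Fintype.card_piFinset]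
  have : ∀ a : α, ((if a ∈ B then ({false} : Finset Bool) else Finset.univ)).card
      = if a ∈ B then 1 else 2 := by
    intro a; by_cases ha : a ∈ B <;> simp [ha]
  simp only [this]
  rw [Finset.prod_ite]
  simp only [Finset.prod_const_one, Finset.prod_const, one_mul]
  congr 1
  rw [Finset.filter_not, Finset.card_sdiff_of_subset (Finset.filter_subset _ _)]
  have hB : Finset.filter (Membership.mem B) univ = B := by ext a; simp
  rw [hB, Finset.card_univ]

open Classical in
lemma count_S (n k : ℕ) :
    (univ.filter (fun S : Fin n → Bool =>
      (univ.filter (fun x => S x = true)).card = k)).card = n.choose k := by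
  have hp := Finset.card_powersetCard k (univ : Finset (Fin n))
  rw [Finset.card_univ, Fintype.card_fin] at hp
  rw [← hp]
  apply Finset.card_bij (fun S _ => univ.filter (fun x => S x = true))
  · intro S hS
    simp only [mem_filter, mem_univ, true_and] at hS ⊢
    rw [Finset.mem_powersetCard]
    exact ⟨Finset.subset_univ _, hS⟩
  · intro S hS T hT h
    funext x
    have : x ∈ univ.filter (fun x => S x = true) ↔ x ∈ univ.filter (fun x => T x = true) := by
      rw [h]
    simp only [mem_filter, mem_univ, true_and] at this
    cases hx : S x <;> cases hx' : T x <;> simp [hx, hx'] at this ⊢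
  · intro A hA
    rw [Finset.mem_powersetCard] at hA
    refine ⟨fun x => decide (x ∈ A), ?_, ?_⟩
    · simp only [mem_filter, mem_univ, true_and]
      rw [← hA.2]
      congr 1
      ext x
      simp
    · ext x; simp

open Classical in
lemma count_F (n : ℕ) (S : Fin n → Bool) :
    (univ.filter (fun F : Fin n → Fin n → Bool =>
        ∀ x y, S x = true ∧ F x y = true → S y = true)).card
    = 2 ^ (n ^ 2 - (univ.filter (fun x => S x = true)).card *
        (n - (univ.filter (fun x => S x = true)).card)) := by
  set A : Finset (Fin n) := univ.filter (fun x => S x = true) with hA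
  set B : Finset (Fin n × Fin n) := A ×ˢ (univ.filter (fun x => S x = false)) with hB
  have hcard : B.card = A.card * (n - A.card) := by
    rw [hB, Finset.card_product]
    congr 1
    have : (univ.filter (fun x => S x = false)) = Aᶜ := by
      ext x; simp only [mem_filter, mem_univ, true_and, Finset.mem_compl, hA]
      cases S x <;> simp
    rw [this, Finset.card_compl, Fintype.card_fin]
  have key : (univ.filter (fun F : Fin n → Fin n → Bool =>
        ∀ x y, S x = true ∧ F x y = true → S y = true)).card
      = (univ.filter (fun f : Fin n × Fin n → Bool => ∀ p ∈ B, f p = false)).card := by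
    apply Finset.card_bij (fun F _ => fun p : Fin n × Fin n => F p.1 p.2)
    · intro F hF
      simp only [mem_filter, mem_univ, true_and] at hF ⊢
      intro p hp
      rw [hB, Finset.mem_product] at hp
      simp only [hA, mem_filter, mem_univ, true_and] at hp
      cases h : F p.1 p.2
      · rfl
      · have := hF p.1 p.2 ⟨hp.1, h⟩
        rw [this] at hp
        simp at hp
    · intro F _ G _ h
      funext x y
      exact congrFun h (x, y)
    · intro f hf
      simp only [mem_filter, mem_univ, true_and] at hf
      refine ⟨fun x y => f (x, y), ?_, rfl⟩
      simp only [mem_filter, mem_univ, true_and]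
      intro x y ⟨hx, hxy⟩
      cases hy : S y
      · have : (x, y) ∈ B := by
          rw [hB, Finset.mem_product]
          simp only [hA, mem_filter, mem_univ, true_and]
          exact ⟨hx, hy⟩
        rw [hf _ this] at hxy
        simp at hxy
      · rfl
  rw [key, count_false_on, Fintype.card_prod, Fintype.card_fin, hcard, sq]

open Classical in
/-- Model count of the smokers theory (Formula 5):
∀x ∀y, Smokes(x) ∧ Friends(x,y) ⇒ Smokes(y). -/
theorem model_count_smokers (n : ℕ) :
    (Finset.univ.filter
        (fun t : (Fin n → Bool) × (Fin n → Fin n → Bool) =>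
          ∀ x y, t.1 x = true ∧ t.2 x y = true → t.1 y = true)).card
    = ∑ k ∈ Finset.range (n + 1), n.choose k * 2 ^ (n ^ 2 - k * (n - k)) := by
  rw [Finset.card_eq_sum_card_fiberwise
    (f := Prod.fst) (t := (univ : Finset (Fin n → Bool))) (fun x _ => mem_univ _)]
  have step : ∀ S : Fin n → Bool,
      ((univ.filter (fun t : (Fin n → Bool) × (Fin n → Fin n → Bool) =>
          ∀ x y, t.1 x = true ∧ t.2 x y = true → t.1 y = true)).filter
        (fun t => t.1 = S)).card
      = 2 ^ (n ^ 2 - (univ.filter (fun x => S x = true)).card *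
          (n - (univ.filter (fun x => S x = true)).card)) := by
    intro S
    rw [← count_F n S]
    apply Finset.card_bij (fun t _ => t.2)
    · intro t ht
      simp only [mem_filter, mem_univ, true_and] at ht ⊢
      obtain ⟨h1, h2⟩ := ht
      subst h2
      exact h1
    · intro t ht u hu h
      simp only [mem_filter] at ht hu
      have := ht.2; have h2 := hu.2
      cases t; cases u
      simp_all
    · intro F hF
      simp only [mem_filter, mem_univ, true_and] at hF
      exact ⟨(S, F), Finset.mem_filter.mpr ⟨Finset.mem_filter.mpr ⟨mem_univ _, hF⟩, rfl⟩, rfl⟩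
  rw [Finset.sum_congr rfl (fun S _ => step S)]
  rw [← Finset.sum_fiberwise_of_maps_to
    (g := fun S : Fin n → Bool => (univ.filter (fun x => S x = true)).card)
    (t := Finset.range (n + 1))
    (fun S _ => by
      rw [Finset.mem_range, Nat.lt_succ_iff]
      calc (univ.filter (fun x => S x = true)).card ≤ (univ : Finset (Fin n)).card :=
            Finset.card_filter_le _ _
        _ = n := by rw [Finset.card_univ, Fintype.card_fin])]
  apply Finset.sum_congr rfl
  intro k hk
  rw [Finset.sum_congr rfl (fun S hS => by
    rw [(Finset.mem_filter.mp hS).2])]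
  rw [Finset.sum_const, count_S, smul_eq_mul]
end

section
/- Correctness of the parameter-predicate encoding of Markov logic networks (Definition 4, grounded form): Let A be a finite type of atoms, I a finite type indexing ground MLN formulas, φ : I → (A → Bool) → Prop decidable truth functions of the formulas, and w : I → ℝ their weights. Then the sum over all ω : A → Bool of ∏_{i : I} (if φ i ω then Real.exp (w i) else 1) equals the sum over all pairs (ω : A → Bool, p : I → Bool) satisfying (∀ i, p i = true ↔ φ i ω) of ∏_{i : I} (if p i then Real.exp (w i) else 1). -/
open Classical in
/-- Correctness of the parameter-predicate encoding of Markov logic networks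
(Definition 4, grounded form). -/
theorem mln_parameter_predicate_encoding
    (A : Type*) [Fintype A] (I : Type*) [Fintype I]
    (φ : I → (A → Bool) → Prop) [∀ i ω, Decidable (φ i ω)]
    (w : I → ℝ) :
    ∑ ω : A → Bool, ∏ i, (if φ i ω then Real.exp (w i) else 1)
    =
    ∑ p ∈ Finset.univ.filter
        (fun p : (A → Bool) × (I → Bool) => ∀ i, p.2 i = true ↔ φ i p.1),
      ∏ i, (if p.2 i then Real.exp (w i) else 1) := by
  refine Finset.sum_nbij' (fun ω => (ω, fun i => decide (φ i ω)))
    (fun p => p.1) ?_ ?_ ?_ ?_ ?_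
  · intro ω _
    simp [Finset.mem_filter]
  · intro p hp
    simp
  · intro ω _
    rfl
  · intro p hp
    simp only [Finset.mem_filter, Finset.mem_univ, true_and] at hp
    refine Prod.ext rfl (funext fun i => ?_)
    rw [Bool.eq_iff_iff, decide_eq_true_iff]
    exact (hp i).symm
  · intro ω _
    apply Finset.prod_congr rfl
    intro i _
    simp
end

section
/- Skolemization of the workshop (noisy-or) example: Let D be a finite nonempty type and let wa⁺, wa⁻, wt⁺, wt⁻, ws⁺, ws⁻ : ℝ be weights for the predicates Attends, ToSeries and the proposition Series. Then the sum over all triples (a : D → Bool, t : D → Bool, s : Bool) satisfying (s = true ↔ ∃ x, a x = true ∧ t x = true) of (∏_x if a x then wa⁺ else wa⁻) · (∏_x if t x then wt⁺ else wt⁻) · (if s then ws⁺ else ws⁻) equals the sum over all quintuples (a : D → Bool, t : D → Bool, s Z S : Bool) satisfying (s = true ↔ Z = true), (∀ x, Z = true ∨ a x = false ∨ t x = false), (Z = true ∨ S = true), and (∀ x, S = true ∨ a x = false ∨ t x = false), of (∏_x if a x then wa⁺ else wa⁻) · (∏_x if t x then wt⁺ else wt⁻) · (if s then ws⁺ else ws⁻)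 · (if S then (1:ℝ) else -1). -/
open Classical in
/-- Skolemization of the workshop (noisy-or) example:
Series ⇔ ∃x, Attends(x) ∧ ToSeries(x). -/
theorem skolemization_workshop_example
    (D : Type*) [Fintype D] [Nonempty D]
    (wap wam wtp wtm wsp wsm : ℝ) :
    ∑ p ∈ Finset.univ.filter
        (fun p : (D → Bool) × (D → Bool) × Bool =>
          p.2.2 = true ↔ ∃ x, p.1 x = true ∧ p.2.1 x = true),
      (∏ x, (if p.1 x then wap else wam)) *
        (∏ x, (if p.2.1 x then wtp else wtm)) *
        (if p.2.2 then wsp else wsm)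
    =
    ∑ q ∈ Finset.univ.filter
        (fun q : (D → Bool) × (D → Bool) × Bool × Bool × Bool =>
          (q.2.2.1 = true ↔ q.2.2.2.1 = true) ∧
          (∀ x, q.2.2.2.1 = true ∨ q.1 x = false ∨ q.2.1 x = false) ∧
          (q.2.2.2.1 = true ∨ q.2.2.2.2 = true) ∧
          (∀ x, q.2.2.2.2 = true ∨ q.1 x = false ∨ q.2.1 x = false)),
      (∏ x, (if q.1 x then wap else wam)) *
        (∏ x, (if q.2.1 x then wtp else wtm)) *
        (if q.2.2.1 then wsp else wsm) *
        (if q.2.2.2.2 then (1 : ℝ) else -1) := by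
  rw [Finset.sum_filter, Finset.sum_filter, Fintype.sum_prod_type, Fintype.sum_prod_type]
  refine Finset.sum_congr rfl fun a _ => ?_
  rw [Fintype.sum_prod_type, Fintype.sum_prod_type]
  refine Finset.sum_congr rfl fun t _ => ?_
  simp only [Fintype.sum_prod_type, Fintype.sum_bool]
  by_cases h : ∃ x, a x = true ∧ t x = true
  · obtain ⟨x₀, hx⟩ := h
    have hZ : ¬ (∀ x : D, False = true ∨ a x = false ∨ t x = false) := by
      intro hall
      rcases hall x₀ with h1 | h1 | h1 <;> simp_all
    have hE : ∃ x, a x = true ∧ t x = true := ⟨x₀, hx⟩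
    have h1 : ¬ ∀ x, a x = true → t x = false := fun hall => by simpa [hx.1, hx.2] using hall x₀
    have h2 : ¬ ∀ x : D, a x = false ∨ t x = false := fun hall => by
      rcases hall x₀ with h1 | h1 <;> simp_all
    simp [hx.1, hx.2, hZ, hE, h1, h2]
  · push_neg at h
    have hZ : ∀ x : D, a x = false ∨ t x = false := by
      intro x
      by_cases ha : a x = true
      · exact Or.inr (by simpa using h x ha)
      · exact Or.inl (by simpa using ha)
    have h' : ¬ ∃ x, a x = true ∧ t x = true := by
      rintro ⟨x, hx1, hx2⟩; exact absurd (h x hx1) (by simp [hx2])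
    simp [h', hZ]
end
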